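/- Fix an even integer K ≥ 2. For N > K let G_N be the K-nearest-neighbor ring on N vertices (vertex i adjacent to vertex j iff (i − j) mod N ∈ {1, …, K/2} ∪ {N − K/2, …, N − 1}), and let λ2(N) denote the second-largest eigenvalue of its coupling matrix A_N = −L(G_N), i.e. the largest eigenvalue of A_N on the orthogonal complement of the all-ones vector. Then λ2(N) < 0 for every N and λ2(N) → 0 as N → ∞. Consequently, for any fixed constants c > 0 and d̄ < 0, there exists N̄ such that for all N > N̄ the synchronization criterion c > |d̄|/|λ2(N)| fails. -/

import Mathlib

/-!
The coupling matrix is circulant: `(A v) i = ∑ m ∈ [1, K/2], (v (i - m) + v (i + m) - 2 v i)`.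
The Fourier mode `j ↦ cos (2πj/N)` has zero sum and is an eigenvector with eigenvalue
`∑ m ∈ [1, K/2], (2 cos (2πm/N) - 2)`, which tends to `0`; hence `λ₂(N)` is squeezed between it
and `0`. Strict negativity is a maximum principle: if `μ ≥ 0`, then at a maximum of a zero-sum
eigenvector `v` (where `v > 0`) the eigenvalue equation forces the next vertex to be a maximum too,
so `v` is constant around the cycle, contradicting `∑ v = 0`. Finally `|d̄| / |λ₂(N)| → ∞`.
-/

/-- Adjacency relation of the `K`-nearest-neighbor ring on `{0, 1, …, N-1}`:
vertex `i` is adjacent to vertex `j` iff `(i - j) mod N` lies in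
`{1, …, K/2} ∪ {N - K/2, …, N - 1}`. -/
def ringAdj (N K : ℕ) (i j : Fin N) : Prop :=
  (1 ≤ (i.val + N - j.val) % N ∧ (i.val + N - j.val) % N ≤ K / 2) ∨
  (N - K / 2 ≤ (i.val + N - j.val) % N ∧ (i.val + N - j.val) % N ≤ N - 1)

instance (N K : ℕ) (i j : Fin N) : Decidable (ringAdj N K i j) := by
  unfold ringAdj; infer_instance

/-- The coupling matrix `A_N = -L(G_N)` of the `K`-nearest-neighbor ring:
`a i j = 1` if `i` and `j` are adjacent (`i ≠ j`), `a i j = 0` for nonadjacent `i ≠ j`,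
and `a i i = -(degree of i)`. -/
noncomputable def ringCoupling (N K : ℕ) : Matrix (Fin N) (Fin N) ℝ :=
  fun i j =>
    if i = j then -((Finset.univ.filter (fun l : Fin N => ringAdj N K i l)).card : ℝ)
    else if ringAdj N K i j then 1 else 0

open Finset Real Filter Topology
open Fin.NatCast Fin.CommRing
open scoped Matrix

section FinArith

lemma Fin.val_add_modEq {N : ℕ} (a b : Fin N) : ((a + b).val : ℤ) ≡ a.val + b.val [ZMOD N] := by
  rw [Fin.val_add]; push_cast; exact Int.mod_modEq _ _

lemma Fin.val_sub_modEq {N : ℕ} (a b : Fin N) : ((a - b).val : ℤ) ≡ a.val - b.val [ZMOD N] := by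
  rw [Fin.val_sub]
  push_cast [Nat.cast_sub b.isLt.le]
  exact (Int.mod_modEq _ _).trans (Int.modEq_iff_dvd.2 ⟨-1, by ring⟩)

variable {N : ℕ} [NeZero N]

lemma Fin.natCast_injOn_Iio : Set.InjOn (Nat.cast : ℕ → Fin N) (Set.Iio N) :=
  fun a ha b hb hab => by rw [← Fin.val_cast_of_lt ha, ← Fin.val_cast_of_lt hb, hab]

lemma Fin.val_sub_sub_natCast (i : Fin N) {m : ℕ} (hm : m < N) : (i - (i - m)).val = m := by
  rw [sub_sub_cancel, Fin.val_cast_of_lt hm]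

lemma Fin.val_sub_add_natCast (i : Fin N) {m : ℕ} (hm₀ : 0 < m) (hm : m < N) :
    (i - (i + m)).val = N - m := by
  have hm' : (m : Fin N) ≠ 0 := fun h => by
    have := congrArg Fin.val h
    rw [Fin.val_cast_of_lt hm, Fin.val_zero] at this
    omega
  rw [sub_add_cancel_left, Fin.val_neg, if_neg hm', Fin.val_cast_of_lt hm]

lemma Fin.val_natCast_modEq (m : ℕ) : ((m : Fin N).val : ℤ) ≡ m [ZMOD N] := by
  rw [Fin.val_natCast]; push_cast; exact Int.mod_modEq _ _

lemma Fin.forall_of_add_one {p : Fin N → Prop} {i : Fin N} (hi : p i)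
    (h : ∀ k, p k → p (k + 1)) (j : Fin N) : p j := by
  have hshift : ∀ n : ℕ, p (i + n) := by
    intro n
    induction n with
    | zero => simpa using hi
    | succ n ih => simpa [add_assoc] using h _ ih
  simpa using hshift (j - i).val

end FinArith

lemma ringAdj_iff_val_sub {N K : ℕ} (i j : Fin N) :
    ringAdj N K i j ↔ (1 ≤ (i - j).val ∧ (i - j).val ≤ K / 2) ∨
      (N - K / 2 ≤ (i - j).val ∧ (i - j).val ≤ N - 1) := by
  have h : (i.val + N - j.val) % N = (i - j).val := by
    rw [Fin.val_sub]; congr 1; omega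
  rw [ringAdj, h]

section Neighbours

variable {N K : ℕ} [NeZero N]

lemma not_ringAdj_self (hN : K < N) (i : Fin N) : ¬ ringAdj N K i i := by
  rw [ringAdj_iff_val_sub, sub_self, Fin.val_zero]
  omega

lemma filter_ringAdj_eq (hN : K < N) (i : Fin N) :
    univ.filter (fun j => ringAdj N K i j) =
      (Icc 1 (K / 2)).image (fun m : ℕ => i - m) ∪ (Icc 1 (K / 2)).image (fun m : ℕ => i + m) := by
  ext j
  simp only [mem_filter, mem_univ, true_and, mem_union, mem_image, mem_Icc, ringAdj_iff_val_sub]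
  constructor
  · rintro (⟨h₁, h₂⟩ | ⟨h₁, h₂⟩)
    · exact Or.inl ⟨(i - j).val, ⟨h₁, h₂⟩, by rw [Fin.cast_val_eq_self, sub_sub_cancel]⟩
    · refine Or.inr ⟨N - (i - j).val, ⟨by omega, by omega⟩, ?_⟩
      rw [Nat.cast_sub (i - j).isLt.le, Fin.natCast_self, Fin.cast_val_eq_self]
      abel
  · rintro (⟨m, ⟨hm₁, hm₂⟩, rfl⟩ | ⟨m, ⟨hm₁, hm₂⟩, rfl⟩)
    · rw [Fin.val_sub_sub_natCast i (by omega)]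
      exact Or.inl ⟨hm₁, hm₂⟩
    · rw [Fin.val_sub_add_natCast i hm₁ (by omega)]
      omega

lemma disjoint_image_sub_image_add (hN : K < N) (i : Fin N) :
    Disjoint ((Icc 1 (K / 2)).image (fun m : ℕ => i - m))
      ((Icc 1 (K / 2)).image (fun m : ℕ => i + m)) := by
  simp only [disjoint_left, mem_image, mem_Icc, not_exists, not_and]
  rintro _ ⟨m, ⟨hm₁, hm₂⟩, rfl⟩ m' ⟨hm₁', hm₂'⟩ h
  have := Fin.val_sub_sub_natCast i (m := m) (by omega)
  rw [← h, Fin.val_sub_add_natCast i hm₁' (by omega)] at this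
  omega

lemma injOn_sub_natCast (hN : K < N) (i : Fin N) :
    Set.InjOn (fun m : ℕ => i - m) (Icc 1 (K / 2) : Set ℕ) :=
  (sub_right_injective (b := i)).comp_injOn <| Fin.natCast_injOn_Iio.mono fun m hm => by
    simp only [coe_Icc, Set.mem_Icc, Set.mem_Iio] at hm ⊢; omega

lemma injOn_add_natCast (hN : K < N) (i : Fin N) :
    Set.InjOn (fun m : ℕ => i + m) (Icc 1 (K / 2) : Set ℕ) :=
  (add_right_injective i).comp_injOn <| Fin.natCast_injOn_Iio.mono fun m hm => by
    simp only [coe_Icc, Set.mem_Icc, Set.mem_Iio] at hm ⊢; omega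

lemma card_filter_ringAdj (hN : K < N) (i : Fin N) :
    (univ.filter (fun j => ringAdj N K i j)).card = 2 * (K / 2) := by
  rw [filter_ringAdj_eq hN, card_union_of_disjoint (disjoint_image_sub_image_add hN i),
    card_image_of_injOn (injOn_sub_natCast hN i), card_image_of_injOn (injOn_add_natCast hN i),
    Nat.card_Icc]
  omega

lemma ringCoupling_mulVec_apply (hN : K < N) (v : Fin N → ℝ) (i : Fin N) :
    (ringCoupling N K *ᵥ v) i = ∑ m ∈ Icc 1 (K / 2), (v (i - m) + v (i + m) - 2 * v i) := by
  have hentry : ∀ j, ringCoupling N K i j * v j =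
      (if i = j then -(2 * (K / 2) : ℕ) * v j else 0) + (if ringAdj N K i j then v j else 0) := by
    intro j
    by_cases hij : i = j
    · subst hij; simp [ringCoupling, not_ringAdj_self hN, card_filter_ringAdj hN]
    · by_cases hadj : ringAdj N K i j <;> simp [ringCoupling, hij, hadj]
  simp only [Matrix.mulVec, dotProduct, hentry, sum_add_distrib, sum_ite_eq, mem_univ, if_true,
    ← sum_filter]
  rw [filter_ringAdj_eq hN, sum_union (disjoint_image_sub_image_add hN i),
    sum_image (injOn_sub_natCast hN i), sum_image (injOn_add_natCast hN i), ← sum_add_distrib]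
  simp only [sum_sub_distrib, sum_const, Nat.card_Icc, nsmul_eq_mul]
  push_cast
  ring

end Neighbours

lemma cos_two_pi_mul_div_eq_of_modEq {N : ℕ} (hN : N ≠ 0) {a b : ℤ} (h : a ≡ b [ZMOD N]) :
    cos (2 * π * a / N) = cos (2 * π * b / N) := by
  obtain ⟨k, hk⟩ := h.dvd
  have hb : (b : ℝ) = a + N * k := by rw [← Int.cast_natCast N]; exact_mod_cast by linarith
  have : 2 * π * b / N = 2 * π * a / N + k * (2 * π) := by
    rw [hb]; field_simp
  rw [this, cos_add_int_mul_two_pi]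

lemma cos_sub_natCast_add_cos_add_natCast {N : ℕ} [NeZero N] (i : Fin N) (m : ℕ) :
    cos (2 * π * (i - m : Fin N).val / N) + cos (2 * π * (i + m : Fin N).val / N) =
      2 * cos (2 * π * i.val / N) * cos (2 * π * m / N) := by
  have hsub := cos_two_pi_mul_div_eq_of_modEq (NeZero.ne N)
    ((Fin.val_sub_modEq i m).trans ((Fin.val_natCast_modEq m).sub_left _))
  have hadd := cos_two_pi_mul_div_eq_of_modEq (NeZero.ne N)
    ((Fin.val_add_modEq i m).trans ((Fin.val_natCast_modEq m).add_left _))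
  push_cast at hsub hadd
  rw [hsub, hadd, mul_sub, mul_add, sub_div, add_div, cos_sub, cos_add]
  ring

noncomputable def ringFourierEigenvalue (N K : ℕ) : ℝ :=
  ∑ m ∈ Icc 1 (K / 2), (2 * cos (2 * π * m / N) - 2)

lemma ringCoupling_mulVec_cos {N K : ℕ} (hN : K < N) :
    ringCoupling N K *ᵥ (fun j : Fin N => cos (2 * π * j.val / N)) =
      ringFourierEigenvalue N K • fun j : Fin N => cos (2 * π * j.val / N) := by
  have : NeZero N := ⟨by omega⟩
  ext i
  rw [ringCoupling_mulVec_apply hN, Pi.smul_apply, smul_eq_mul, ringFourierEigenvalue, sum_mul]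
  refine sum_congr rfl fun m _ => ?_
  rw [cos_sub_natCast_add_cos_add_natCast]
  ring

lemma sum_cos_two_pi_mul_div {N : ℕ} (hN : 1 < N) : ∑ j : Fin N, cos (2 * π * j.val / N) = 0 := by
  have hζ := Complex.isPrimitiveRoot_exp N (by omega)
  have hre : ∀ j : ℕ, cos (2 * π * j / N) = (Complex.exp (2 * π * Complex.I / N) ^ j).re := by
    intro j
    rw [← Complex.exp_nat_mul, ← Complex.exp_ofReal_mul_I_re]
    congr 2
    push_cast
    ring
  rw [Fin.sum_univ_eq_sum_range (fun j => cos (2 * π * j / N)), sum_congr rfl fun j _ => hre j,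
    ← Complex.re_sum, hζ.geom_sum_eq_zero hN, Complex.zero_re]

lemma tendsto_ringFourierEigenvalue (K : ℕ) :
    Tendsto (fun N => ringFourierEigenvalue N K) atTop (𝓝 0) := by
  have hcos (m : ℕ) : Tendsto (fun N : ℕ => cos (2 * π * m / N)) atTop (𝓝 1) := by
    simpa only [Function.comp_def, cos_zero] using
      (continuous_cos.tendsto 0).comp (tendsto_const_div_atTop_nhds_zero_nat (2 * π * m))
  have := tendsto_finsetSum (Icc 1 (K / 2)) fun m _ => ((hcos m).const_mul 2).sub_const 2
  simpa only [ringFourierEigenvalue, mul_one, sub_self, sum_const_zero] using this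

lemma ringCoupling_mulVec_le_of_isMax {N K : ℕ} [NeZero N] (hK : 2 ≤ K) (hN : K < N)
    {v : Fin N → ℝ} {k : Fin N} (hk : ∀ j, v j ≤ v k) :
    (ringCoupling N K *ᵥ v) k ≤ v (k + 1) - v k := by
  have h₁ : 1 ∈ Icc 1 (K / 2) := mem_Icc.2 ⟨le_rfl, by omega⟩
  rw [ringCoupling_mulVec_apply hN, ← add_sum_erase _ _ h₁]
  have hrest : ∑ m ∈ (Icc 1 (K / 2)).erase 1, (v (k - m) + v (k + m) - 2 * v k) ≤ 0 :=
    sum_nonpos fun m _ => by linarith [hk (k - m), hk (k + m)]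
  push_cast
  linarith [hk (k - 1)]

lemma ringCoupling_eigenvalue_neg {N K : ℕ} (hK : 2 ≤ K) (hN : K < N) {μ : ℝ}
    {v : Fin N → ℝ} (hv : v ≠ 0) (hsum : ∑ i, v i = 0) (heig : ringCoupling N K *ᵥ v = μ • v) :
    μ < 0 := by
  have : NeZero N := ⟨by omega⟩
  by_contra! hμ
  obtain ⟨k, -, hk⟩ := exists_max_image univ v univ_nonempty
  obtain ⟨j, -, hj⟩ := exists_pos_of_sum_zero_of_exists_nonzero v hsum
    (by simpa [funext_iff] using hv)
  have hmax_pos : 0 < v k := hj.trans_le (hk j (mem_univ j))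
  have hstep (l : Fin N) (hl : v l = v k) : v (l + 1) = v k := by
    have hle := ringCoupling_mulVec_le_of_isMax hK hN (k := l) fun j => hl ▸ hk j (mem_univ j)
    rw [heig, Pi.smul_apply, smul_eq_mul, hl] at hle
    linarith [hk (l + 1) (mem_univ _), mul_nonneg hμ hmax_pos.le]
  have hconst := Fin.forall_of_add_one (p := fun l => v l = v k) rfl hstep
  have hsum_const : ∑ i, v i = N * v k := by simp [hconst]
  have hN_pos : (0 : ℝ) < N := by exact_mod_cast (NeZero.pos N)
  nlinarith

lemma Filter.Tendsto.eventually_le_div_abs {α : Type*} {l : Filter α} {f : α → ℝ}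
    (hf : Tendsto f l (𝓝 0)) (hf₀ : ∀ᶠ x in l, f x ≠ 0) {a c : ℝ} (ha : 0 < a) (hc : 0 < c) :
    ∀ᶠ x in l, c ≤ a / |f x| := by
  have hsmall : ∀ᶠ x in l, |f x| < a / c := by
    simpa using hf.abs.eventually (gt_mem_nhds (by rw [abs_zero]; positivity : |(0 : ℝ)| < a / c))
  filter_upwards [hsmall, hf₀] with x hx hx₀
  rw [le_div_iff₀ (abs_pos.2 hx₀)]
  rw [lt_div_iff₀ hc] at hx
  linarith

theorem ring_second_eigenvalue_tendsto_zero_and_criterion_fails_general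
    {K : ℕ} (hK : 2 ≤ K) (lam2 : ℕ → ℝ)
    (hlam2 : ∀ N : ℕ, K < N →
      IsGreatest {μ : ℝ | ∃ v : Fin N → ℝ, v ≠ 0 ∧ (∑ i, v i) = 0 ∧
        (ringCoupling N K).mulVec v = μ • v} (lam2 N)) :
    (∀ N : ℕ, K < N → lam2 N < 0) ∧
    Filter.Tendsto lam2 Filter.atTop (nhds 0) ∧
    (∀ c d : ℝ, 0 < c → d < 0 →
      ∃ Nbar : ℕ, ∀ N : ℕ, Nbar < N → ¬ (|d| / |lam2 N| < c)) := by
  have hneg (N : ℕ) (hN : K < N) : lam2 N < 0 := by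
    obtain ⟨v, hv, hsum, heig⟩ := (hlam2 N hN).1
    exact ringCoupling_eigenvalue_neg hK hN hv hsum heig
  have hlower (N : ℕ) (hN : K < N) : ringFourierEigenvalue N K ≤ lam2 N :=
    (hlam2 N hN).2 ⟨_, fun h => by simpa using congrFun h ⟨0, by omega⟩,
      sum_cos_two_pi_mul_div (by omega), ringCoupling_mulVec_cos hN⟩
  have htendsto : Tendsto lam2 atTop (𝓝 0) :=
    tendsto_of_tendsto_of_tendsto_of_le_of_le' (tendsto_ringFourierEigenvalue K) tendsto_const_nhds
      ((eventually_gt_atTop K).mono hlower)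
      ((eventually_gt_atTop K).mono fun N hN => (hneg N hN).le)
  refine ⟨hneg, htendsto, fun c d hc hd => ?_⟩
  have hne : ∀ᶠ N in atTop, lam2 N ≠ 0 := (eventually_gt_atTop K).mono fun N hN => (hneg N hN).ne
  obtain ⟨Nbar, hNbar⟩ :=
    (htendsto.eventually_le_div_abs hne (abs_pos.2 hd.ne) hc).exists_forall_of_atTop
  exact ⟨Nbar, fun N hN => not_lt.2 (hNbar N hN.le)⟩

/-- Fix an even integer `K ≥ 2`.  For `N > K` let `λ₂(N)` be the second-largest eigenvalue
of the coupling matrix `A_N = -L(G_N)` of the `K`-nearest-neighbor ring on `N` vertices,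
i.e. the largest eigenvalue of `A_N` on the orthogonal complement of the all-ones vector.
Then `λ₂(N) < 0` for every `N` and `λ₂(N) → 0` as `N → ∞`.  Consequently, for any fixed
constants `c > 0` and `d̄ < 0`, there exists `N̄` such that for all `N > N̄` the
synchronization criterion `c > |d̄| / |λ₂(N)|` fails. -/
theorem ring_second_eigenvalue_tendsto_zero_and_criterion_fails
    {K : ℕ} (hK : 2 ≤ K) (hKeven : Even K) (lam2 : ℕ → ℝ)
    (hlam2 : ∀ N : ℕ, K < N →
      IsGreatest {μ : ℝ | ∃ v : Fin N → ℝ, v ≠ 0 ∧ (∑ i, v i) = 0 ∧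
        (ringCoupling N K).mulVec v = μ • v} (lam2 N)) :
    (∀ N : ℕ, K < N → lam2 N < 0) ∧
    Filter.Tendsto lam2 Filter.atTop (nhds 0) ∧
    (∀ c d : ℝ, 0 < c → d < 0 →
      ∃ Nbar : ℕ, ∀ N : ℕ, Nbar < N → ¬ (|d| / |lam2 N| < c)) :=
  ring_second_eigenvalue_tendsto_zero_and_criterion_fails_general hK lam2 hlam2
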